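/- Let k be a field of characteristic not equal to 2, (A,·,B) a finite-dimensional symmetric Frobenius k-algebra, and φ : A → A* the linear isomorphism with φ(x)(y) = B(x,y). Let α, β : A → A be linear maps with β self-adjoint with respect to B (B(β(x),y) = B(x,β(y))), and let κ ∈ k. Set α̃ = α∘φ⁻¹ and β̃ = β∘φ⁻¹ : A* → A. Then the pair (α,β) is an extended O-operator with modification β of mass κ on (A,L,R), i.e. β is a balanced A-bimodule homomorphism (β(x)·y = x·β(y), β(x·y) = x·β(y) = β(x)·y) and α(x)·α(y) − α(α(x)·y + x·α(y)) = κ β(x)·β(y) for all x, y ∈ A, if and only if (α̃,β̃) is an extended O-operator with modification β̃ of mass κ on the dual bimodule (A*,R*,L*), i.e. β̃ is a balanced A-bimodule homomorphism from (A*,R*,L*) to A (b*(y·β̃(a*)) = a*(β̃(b*)·y), β̃(R*(x)a*) = x·β̃(a*), β̃(a* L*(x)) = β̃(a*)·x) and α̃(a*)·α̃(b*) − α̃(R*(α̃(a*))b* + a* L*(α̃(b*))) = κ β̃(a*)·β̃(b*) for all a*, b* ∈ A*. -/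

import Mathlib

/-! Under `ψ = φ⁻¹` the dual actions become multiplications: by invariance and symmetry of `B`,
`ψ (R*(x) a*) = x · ψ a*` and `ψ (a* L*(x)) = ψ a* · x`, so `ψ` is an isomorphism of bimodules
`(A*, R*, L*) ≅ (A, L, R)` and each condition on `(α̃, β̃)` is the corresponding condition on
`(α, β)` read through the bijection `ψ`. The one extra condition on the dual side,
`b*(y · β̃ a*) = a*(β̃ b* · y)`, is `B`-adjoint to `β (x · y) = β x · y` because `β` is
self-adjoint. -/

section FrobeniusDual

variable {k A : Type*} [CommSemiring k] [NonUnitalNonAssocSemiring A] [Module k A]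
  {B : A →ₗ[k] A →ₗ[k] k} {ψ : Module.Dual k A → A}

theorem frobeniusInv_add (hψ1 : ∀ x : A, ψ (B x) = x) (hψ2 : ∀ f, B (ψ f) = f)
    (f g : Module.Dual k A) : ψ (f + g) = ψ f + ψ g := by
  rw [← hψ2 f, ← hψ2 g, ← map_add, hψ1, hψ1, hψ1]

theorem frobeniusInv_comp_mulRight [IsScalarTower k A A]
    (hBsymm : ∀ x y : A, B x y = B y x) (hBinv : ∀ x y z : A, B (x * y) z = B x (y * z))
    (hψ1 : ∀ x : A, ψ (B x) = x) (hψ2 : ∀ f, B (ψ f) = f) (x : A) (a : Module.Dual k A) :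
    ψ (a ∘ₗ LinearMap.mulRight k x) = x * ψ a := by
  have h : a ∘ₗ LinearMap.mulRight k x = B (x * ψ a) := by
    ext y
    calc a (y * x) = B (ψ a) (y * x) := by rw [hψ2]
      _ = B (x * ψ a) y := by rw [hBsymm, hBinv, hBsymm]
  rw [h, hψ1]

theorem frobeniusInv_comp_mulLeft [SMulCommClass k A A]
    (hBsymm : ∀ x y : A, B x y = B y x) (hBinv : ∀ x y z : A, B (x * y) z = B x (y * z))
    (hψ1 : ∀ x : A, ψ (B x) = x) (hψ2 : ∀ f, B (ψ f) = f) (x : A) (a : Module.Dual k A) :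
    ψ (a ∘ₗ LinearMap.mulLeft k x) = ψ a * x := by
  have h : a ∘ₗ LinearMap.mulLeft k x = B (ψ a * x) := by
    ext y
    calc a (x * y) = B (ψ a) (x * y) := by rw [hψ2]
      _ = B (ψ a * x) y := by rw [hBsymm, hBinv, hBsymm, hBinv, hBsymm]
  rw [h, hψ1]

theorem dual_mulRight_iff [IsScalarTower k A A]
    (hBsymm : ∀ x y : A, B x y = B y x) (hBinv : ∀ x y z : A, B (x * y) z = B x (y * z))
    (hψ1 : ∀ x : A, ψ (B x) = x) (hψ2 : ∀ f, B (ψ f) = f) (β : A → A) :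
    (∀ (x : A) (a : Module.Dual k A), β (ψ (a ∘ₗ LinearMap.mulRight k x)) = x * β (ψ a)) ↔
      ∀ x y : A, β (x * y) = x * β y := by
  have hsurj : Function.Surjective ψ := fun x => ⟨B x, hψ1 x⟩
  simp only [frobeniusInv_comp_mulRight hBsymm hBinv hψ1 hψ2]
  exact forall_congr' fun x => (hsurj.forall (p := fun y => β (x * y) = x * β y)).symm

theorem dual_mulLeft_iff [SMulCommClass k A A]
    (hBsymm : ∀ x y : A, B x y = B y x) (hBinv : ∀ x y z : A, B (x * y) z = B x (y * z))
    (hψ1 : ∀ x : A, ψ (B x) = x) (hψ2 : ∀ f, B (ψ f) = f) (β : A → A) :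
    (∀ (x : A) (a : Module.Dual k A), β (ψ (a ∘ₗ LinearMap.mulLeft k x)) = β (ψ a) * x) ↔
      ∀ x y : A, β (x * y) = β x * y := by
  have hsurj : Function.Surjective ψ := fun x => ⟨B x, hψ1 x⟩
  simp only [frobeniusInv_comp_mulLeft hBsymm hBinv hψ1 hψ2]
  rw [forall_comm]
  exact (hsurj.forall (p := fun x => ∀ y, β (x * y) = β x * y)).symm

theorem dual_balanced_of_map_mul_right
    (hBsymm : ∀ x y : A, B x y = B y x) (hBinv : ∀ x y z : A, B (x * y) z = B x (y * z))
    (hψ2 : ∀ f, B (ψ f) = f) {β : A →ₗ[k] A} (hsa : ∀ x y : A, B (β x) y = B x (β y))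
    (hβ : ∀ x y : A, β (x * y) = β x * y) (a b : Module.Dual k A) (y : A) :
    b (y * β (ψ a)) = a (β (ψ b) * y) := by
  calc b (y * β (ψ a)) = B (ψ b) (y * β (ψ a)) := by rw [hψ2]
    _ = B (β (ψ b) * y) (ψ a) := by rw [← hBinv, ← hsa, hβ]
    _ = a (β (ψ b) * y) := by rw [hBsymm, hψ2]

end FrobeniusDual

theorem dual_extendedOOperator_iff {k A : Type*} [CommRing k] [NonUnitalNonAssocRing A]
    [Module k A] [SMulCommClass k A A] [IsScalarTower k A A]
    {B : A →ₗ[k] A →ₗ[k] k} {ψ : Module.Dual k A → A}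
    (hBsymm : ∀ x y : A, B x y = B y x) (hBinv : ∀ x y z : A, B (x * y) z = B x (y * z))
    (hψ1 : ∀ x : A, ψ (B x) = x) (hψ2 : ∀ f, B (ψ f) = f) (α β : A →ₗ[k] A) (κ : k) :
    (∀ a b : Module.Dual k A,
       α (ψ a) * α (ψ b) -
           α (ψ ((b ∘ₗ LinearMap.mulRight k (α (ψ a))) +
             (a ∘ₗ LinearMap.mulLeft k (α (ψ b))))) =
         κ • (β (ψ a) * β (ψ b))) ↔
      ∀ x y : A, α x * α y - α (α x * y + x * α y) = κ • (β x * β y) := by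
  have hsurj : Function.Surjective ψ := fun x => ⟨B x, hψ1 x⟩
  simp only [frobeniusInv_add hψ1 hψ2, frobeniusInv_comp_mulRight hBsymm hBinv hψ1 hψ2,
    frobeniusInv_comp_mulLeft hBsymm hBinv hψ1 hψ2]
  exact (hsurj.forall₂
    (p := fun x y => α x * α y - α (α x * y + x * α y) = κ • (β x * β y))).symm

theorem stmt14 {k A : Type} [Field k]
    [NonUnitalRing A] [Module k A] [SMulCommClass k A A] [IsScalarTower k A A]
    (B : A →ₗ[k] A →ₗ[k] k)
    (hBsymm : ∀ x y : A, B x y = B y x)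
    (hBinv : ∀ x y z : A, B (x * y) z = B x (y * z))
    (ψ : Module.Dual k A → A)
    (hψ1 : ∀ x : A, ψ (B x) = x)
    (hψ2 : ∀ f : Module.Dual k A, B (ψ f) = f)
    (α β : A →ₗ[k] A)
    (hsa : ∀ x y : A, B (β x) y = B x (β y)) (κ : k) :
    -- (α, β) extended O-operator with modification β of mass κ on (A, L, R)
    (((∀ x y : A, β x * y = x * β y) ∧
      (∀ x y : A, β (x * y) = x * β y) ∧
      (∀ x y : A, β (x * y) = β x * y)) ∧
     (∀ x y : A, α x * α y - α (α x * y + x * α y) = κ • (β x * β y))) ↔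
    -- (α̃, β̃) extended O-operator with modification β̃ of mass κ on (A*, R*, L*)
    (((∀ (a b : Module.Dual k A) (y : A), b (y * β (ψ a)) = a (β (ψ b) * y)) ∧
      (∀ (x : A) (a : Module.Dual k A), β (ψ (a ∘ₗ LinearMap.mulRight k x)) = x * β (ψ a)) ∧
      (∀ (x : A) (a : Module.Dual k A), β (ψ (a ∘ₗ LinearMap.mulLeft k x)) = β (ψ a) * x)) ∧
     (∀ a b : Module.Dual k A,
       α (ψ a) * α (ψ b) -
           α (ψ ((b ∘ₗ LinearMap.mulRight k (α (ψ a))) +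
             (a ∘ₗ LinearMap.mulLeft k (α (ψ b))))) =
         κ • (β (ψ a) * β (ψ b)))) := by
  rw [dual_mulRight_iff hBsymm hBinv hψ1 hψ2, dual_mulLeft_iff hBsymm hBinv hψ1 hψ2,
    dual_extendedOOperator_iff hBsymm hBinv hψ1 hψ2]
  constructor
  · rintro ⟨⟨-, hβl, hβr⟩, hα⟩
    exact ⟨⟨dual_balanced_of_map_mul_right hBsymm hBinv hψ2 hsa hβr, hβl, hβr⟩, hα⟩
  · rintro ⟨⟨-, hβl, hβr⟩, hα⟩
    exact ⟨⟨fun x y => by rw [← hβr, hβl], hβl, hβr⟩, hα⟩
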